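/- arXiv:1301.2949 — 7 statements merged into one kernel-verified Lean document; each statement's English description precedes it below -/
import Mathlib

section
/- If a ≤ b ≤ c are positive integers with 1/a + 1/b + 1/c < 1, then 1/a + 1/b + 1/c ≤ 41/42, with equality only if (a,b,c) = (2,3,7). -/
/-!
Unit fractions are discrete: `1/n < 1/k` forces `1/n ≤ 1/(k+1)`. Applied greedily, `μ < 1`
gives `a ≥ 2`; for `a ≥ 3` it gives `μ ≤ 1/3 + 1/3 + 1/4`, and for `a = 2` it gives `b ≥ 3`,
then either `b ≥ 4` and `μ ≤ 1/2 + 1/4 + 1/5`, or `b = 3` and `c ≥ 7`, where `c ≥ 8` gives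
`μ ≤ 1/2 + 1/3 + 1/8`. So only `(2, 3, 7)` can reach `41/42`.
-/

section UnitFractions

variable {K : Type*} [Field K] [LinearOrder K] [IsStrictOrderedRing K]

theorem Nat.lt_of_one_div_lt_one_div {n k : ℕ} (hn : 0 < n) (h : (1 : K) / n < 1 / k) :
    k < n := by
  by_contra! hnk
  exact h.not_ge (one_div_le_one_div_of_le (by positivity) (by exact_mod_cast hnk))

theorem Nat.one_div_cast_le_one_div_cast {m n : ℕ} (hm : 0 < m) (h : m ≤ n) :
    (1 : K) / n ≤ 1 / m :=
  one_div_le_one_div_of_le (by positivity) (by exact_mod_cast h)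

end UnitFractions

theorem one_third_add_one_div_add_one_div_lt {b c : ℕ} (hb : 3 ≤ b) (hbc : b ≤ c)
    (hhyp : (1 : ℚ) / 3 + 1 / b + 1 / c < 1) :
    (1 : ℚ) / 3 + 1 / b + 1 / c < 41 / 42 := by
  have hc_inv : (1 : ℚ) / c ≤ 1 / b := Nat.one_div_cast_le_one_div_cast (by omega) hbc
  obtain rfl | hb4 := (show b = 3 ∨ 4 ≤ b by omega)
  · have hc : 3 < c := Nat.lt_of_one_div_lt_one_div (K := ℚ) (by omega) (by push_cast; linarith)
    have : (1 : ℚ) / c ≤ 1 / (4 : ℕ) := Nat.one_div_cast_le_one_div_cast (by norm_num) hc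
    push_cast at *
    linarith
  · have : (1 : ℚ) / b ≤ 1 / (4 : ℕ) := Nat.one_div_cast_le_one_div_cast (by norm_num) hb4
    push_cast at *
    linarith

theorem one_half_add_one_div_add_one_div_lt_or {b c : ℕ} (hb : 0 < b) (hbc : b ≤ c)
    (hhyp : (1 : ℚ) / 2 + 1 / b + 1 / c < 1) :
    (1 : ℚ) / 2 + 1 / b + 1 / c < 41 / 42 ∨ b = 3 ∧ c = 7 := by
  have hc_nonneg : (0 : ℚ) ≤ 1 / c := by positivity
  have hc_inv : (1 : ℚ) / c ≤ 1 / b := Nat.one_div_cast_le_one_div_cast hb hbc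
  have hb2 : 2 < b := Nat.lt_of_one_div_lt_one_div (K := ℚ) hb (by push_cast; linarith)
  obtain rfl | rfl | hb5 := (show b = 3 ∨ b = 4 ∨ 5 ≤ b by omega)
  · have hc : 6 < c := Nat.lt_of_one_div_lt_one_div (K := ℚ) (by omega) (by push_cast; linarith)
    obtain rfl | hc8 := (show c = 7 ∨ 8 ≤ c by omega)
    · exact Or.inr ⟨rfl, rfl⟩
    · have : (1 : ℚ) / c ≤ 1 / (8 : ℕ) := Nat.one_div_cast_le_one_div_cast (by norm_num) hc8
      push_cast at *
      left; linarith
  · have hc : 4 < c := Nat.lt_of_one_div_lt_one_div (K := ℚ) (by omega) (by push_cast; linarith)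
    have : (1 : ℚ) / c ≤ 1 / (5 : ℕ) := Nat.one_div_cast_le_one_div_cast (by norm_num) hc
    push_cast at *
    left; linarith
  · have : (1 : ℚ) / b ≤ 1 / (5 : ℕ) := Nat.one_div_cast_le_one_div_cast (by norm_num) hb5
    push_cast at *
    left; linarith

theorem hyperbolic_mu_lt_41_42_or_eq {a b c : ℕ} (ha : 0 < a) (hab : a ≤ b) (hbc : b ≤ c)
    (hhyp : (1 : ℚ) / a + 1 / b + 1 / c < 1) :
    (1 : ℚ) / a + 1 / b + 1 / c < 41 / 42 ∨ a = 2 ∧ b = 3 ∧ c = 7 := by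
  have hb_inv : (1 : ℚ) / b ≤ 1 / a := Nat.one_div_cast_le_one_div_cast ha hab
  have hc_inv : (1 : ℚ) / c ≤ 1 / b := Nat.one_div_cast_le_one_div_cast (by omega) hbc
  have hc_nonneg : (0 : ℚ) ≤ 1 / c := by positivity
  have ha1 : 1 < a := Nat.lt_of_one_div_lt_one_div (K := ℚ) ha (by push_cast; linarith)
  obtain rfl | rfl | ha4 := (show a = 2 ∨ a = 3 ∨ 4 ≤ a by omega)
  · simpa using one_half_add_one_div_add_one_div_lt_or (by omega) hbc (by exact_mod_cast hhyp)
  · left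
    exact_mod_cast one_third_add_one_div_add_one_div_lt hab hbc (by exact_mod_cast hhyp)
  · have : (1 : ℚ) / a ≤ 1 / (4 : ℕ) := Nat.one_div_cast_le_one_div_cast (by norm_num) ha4
    push_cast at this
    left; linarith

theorem hyperbolic_mu_le_41_42 (a b c : ℕ) (ha : 0 < a) (hab : a ≤ b) (hbc : b ≤ c)
    (hhyp : (1 : ℚ)/a + 1/b + 1/c < 1) :
    (1 : ℚ)/a + 1/b + 1/c ≤ 41/42 ∧
      ((1 : ℚ)/a + 1/b + 1/c = 41/42 → a = 2 ∧ b = 3 ∧ c = 7) := by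
  rcases hyperbolic_mu_lt_41_42_or_eq ha hab hbc hhyp with hlt | ⟨rfl, rfl, rfl⟩
  · exact ⟨hlt.le, fun heq => absurd heq hlt.ne⟩
  · norm_num
end

section
/- Let (a,b,c) be a hyperbolic triple (positive integers with a ≤ b ≤ c and 1/a+1/b+1/c < 1). For the exponents e_j = j (j = 1,...,r) of type A_r with r ≥ 10, we have Σ_{k∈{a,b,c}} Σ_{j=1}^r (1 + 2⌊j/k⌋) < r(r+2). -/
/-!
Write `T_k(r) = ∑_{j=1}^r (1 + 2⌊j/k⌋)`. Tracking the remainder `s = r % k` gives the exact identity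
`4k·T_k(r) + (2s + 2 - k)² = 4r(r+2) + (k-2)²`, so `T_k(r) ≤ (r(r+2) + (k-2)²/4) / k`: up to a bounded
error each summand is `dim A_r / k`. Since `T_k(r)` decreases in `k`, and every hyperbolic triple
dominates one of `(2,3,7)`, `(2,4,5)`, `(3,3,4)`, it suffices to treat these three; there
`1/a + 1/b + 1/c ≤ 41/42`, and the error terms are absorbed as soon as `r ≥ 6`.
-/

def exponentSum (k r : ℕ) : ℕ := ∑ j ∈ Finset.Icc 1 r, (1 + 2 * (j / k))

lemma exponentSum_succ (k r : ℕ) :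
    exponentSum k (r + 1) = exponentSum k r + (1 + 2 * ((r + 1) / k)) :=
  Finset.sum_Icc_succ_top (Nat.le_add_left 1 r) _

lemma exponentSum_anti {k l : ℕ} (hk : 0 < k) (hkl : k ≤ l) (r : ℕ) :
    exponentSum l r ≤ exponentSum k r :=
  Finset.sum_le_sum fun j _ => by
    have := Nat.div_le_div_left (a := j) hkl hk
    omega

lemma add_one_mod_eq_or (k r : ℕ) :
    (r + 1) % k = r % k + 1 ∨ (r + 1) % k = 0 ∧ r % k + 1 = k := by
  rcases Nat.eq_zero_or_pos k with rfl | hk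
  · simp only [Nat.mod_zero, true_or]
  have h := Nat.div_add_mod r k
  have h' := Nat.div_add_mod (r + 1) k
  have hlt := Nat.mod_lt r hk
  have hlt' := Nat.mod_lt (r + 1) hk
  rw [Nat.succ_div] at h'
  split_ifs at h'
  · right; rw [mul_add] at h'; omega
  · left; rw [add_zero] at h'; omega

theorem four_mul_mul_exponentSum_add_sq (k r : ℕ) :
    4 * k * (exponentSum k r : ℤ) + (2 * (r % k : ℕ) + 2 - k) ^ 2 =
      4 * r * (r + 2) + (k - 2) ^ 2 := by
  induction r with
  | zero => simp only [exponentSum, Finset.Icc_eq_empty_of_lt one_pos, Finset.sum_empty,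
      Nat.zero_mod, Nat.cast_zero]; ring
  | succ r ih =>
    rw [exponentSum_succ]
    have hdiv : (k * ((r + 1) / k : ℕ) + ((r + 1) % k : ℕ) : ℤ) = r + 1 := by
      exact_mod_cast Nat.div_add_mod (r + 1) k
    rcases add_one_mod_eq_or k r with hs | ⟨hs, hk⟩
    · rw [hs] at hdiv ⊢
      push_cast at ih hdiv ⊢
      linear_combination ih + 8 * hdiv
    · have hk : ((r % k : ℕ) : ℤ) + 1 = k := by exact_mod_cast hk
      rw [hs] at hdiv ⊢
      push_cast at hdiv ⊢
      linear_combination ih + 8 * hdiv - 4 * (((r % k : ℕ) : ℤ) + 1) * hk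

theorem four_mul_mul_exponentSum_le (k r : ℕ) :
    4 * k * (exponentSum k r : ℤ) ≤ 4 * r * (r + 2) + (k - 2) ^ 2 := by
  linarith [four_mul_mul_exponentSum_add_sq k r, sq_nonneg (2 * (r % k : ℕ) + 2 - k : ℤ)]

theorem hyperbolic_triple_cases {a b c : ℕ} (ha : 0 < a) (hab : a ≤ b) (hbc : b ≤ c)
    (hhyp : (1 : ℚ) / a + 1 / b + 1 / c < 1) :
    (2 ≤ a ∧ 3 ≤ b ∧ 7 ≤ c) ∨ (2 ≤ a ∧ 4 ≤ b ∧ 5 ≤ c) ∨ (3 ≤ a ∧ 3 ≤ b ∧ 4 ≤ c) := by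
  contrapose! hhyp
  obtain rfl | ⟨rfl, rfl, hc6⟩ | ⟨rfl, rfl⟩ | ⟨rfl, rfl, rfl⟩ | ⟨rfl, rfl, rfl⟩ :
      a = 1 ∨ (a = 2 ∧ b = 3 ∧ c ≤ 6) ∨ (a = 2 ∧ b = 2) ∨ (a = 2 ∧ b = 4 ∧ c = 4) ∨
        (a = 3 ∧ b = 3 ∧ c = 3) := by omega
  · have hb : (0 : ℚ) ≤ 1 / b := by positivity
    have hc : (0 : ℚ) ≤ 1 / c := by positivity
    rw [Nat.cast_one, div_one]
    linarith
  · interval_cases c <;> norm_num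
  all_goals norm_num

section MinimalTriples

variable {r : ℕ}

theorem exponentSum_two_three_seven_lt (hr : 6 ≤ r) :
    exponentSum 2 r + exponentSum 3 r + exponentSum 7 r < r * (r + 2) := by
  have h2 := four_mul_mul_exponentSum_le 2 r
  have h3 := four_mul_mul_exponentSum_le 3 r
  have h7 := four_mul_mul_exponentSum_le 7 r
  have hdim : (48 : ℤ) ≤ r * (r + 2) := by nlinarith
  zify
  norm_num at h2 h3 h7
  linarith

theorem exponentSum_two_four_five_lt (hr : 3 ≤ r) :
    exponentSum 2 r + exponentSum 4 r + exponentSum 5 r < r * (r + 2) := by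
  have h2 := four_mul_mul_exponentSum_le 2 r
  have h4 := four_mul_mul_exponentSum_le 4 r
  have h5 := four_mul_mul_exponentSum_le 5 r
  have hdim : (15 : ℤ) ≤ r * (r + 2) := by nlinarith
  zify
  norm_num at h2 h4 h5
  linarith

theorem exponentSum_three_three_four_lt (hr : 2 ≤ r) :
    exponentSum 3 r + exponentSum 3 r + exponentSum 4 r < r * (r + 2) := by
  have h3 := four_mul_mul_exponentSum_le 3 r
  have h4 := four_mul_mul_exponentSum_le 4 r
  have hdim : (8 : ℤ) ≤ r * (r + 2) := by nlinarith
  zify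
  norm_num at h3 h4
  linarith

end MinimalTriples

lemma exponentSum_add_add_anti {p q t a b c : ℕ} (hp : 0 < p) (hq : 0 < q) (ht : 0 < t)
    (hpa : p ≤ a) (hqb : q ≤ b) (htc : t ≤ c) (r : ℕ) :
    exponentSum a r + exponentSum b r + exponentSum c r ≤
      exponentSum p r + exponentSum q r + exponentSum t r :=
  add_le_add (add_le_add (exponentSum_anti hp hpa r) (exponentSum_anti hq hqb r))
    (exponentSum_anti ht htc r)

theorem typeA_inequality_large_rank (a b c r : ℕ) (ha : 0 < a) (hab : a ≤ b) (hbc : b ≤ c)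
    (hhyp : (1 : ℚ)/a + 1/b + 1/c < 1) (hr : 10 ≤ r) :
    ∑ j ∈ Finset.Icc 1 r, ((1 + 2 * (j / a)) + (1 + 2 * (j / b)) + (1 + 2 * (j / c)))
      < r * (r + 2) := by
  rw [Finset.sum_add_distrib, Finset.sum_add_distrib]
  show exponentSum a r + exponentSum b r + exponentSum c r < r * (r + 2)
  rcases hyperbolic_triple_cases ha hab hbc hhyp with ⟨hpa, hqb, htc⟩ | ⟨hpa, hqb, htc⟩ |
      ⟨hpa, hqb, htc⟩
  · exact (exponentSum_add_add_anti two_pos three_pos (by norm_num) hpa hqb htc r).trans_lt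
      (exponentSum_two_three_seven_lt (by omega))
  · exact (exponentSum_add_add_anti two_pos four_pos (by norm_num) hpa hqb htc r).trans_lt
      (exponentSum_two_four_five_lt (by omega))
  · exact (exponentSum_add_add_anti three_pos three_pos four_pos hpa hqb htc r).trans_lt
      (exponentSum_three_three_four_lt (by omega))
end

section
/- Let (a,b,c) be a hyperbolic triple of integers (a ≤ b ≤ c, 1/a+1/b+1/c < 1). For the exponents 1, 3, ..., 2r−1 of type B_r or C_r with r ≥ 3 and (a,b) ≠ (2,3), (3,3), we have Σ_{k∈{a,b,c}} Σ_{j=1}^r (1 + 2⌊(2j−1)/k⌋) < r(2r+1), except for finitely many explicitly listed small cases; in particular the strict inequality holds whenever r ≥ 9. -/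
/-!
Every `k` contributes `1 + 2 ⌊m/k⌋` for the exponent `m`, which is antitone in `k`, so the sum only
grows when `(a, b, c)` is replaced by a componentwise smaller triple. Outside the excluded families
`(2, 3, c)` and `(3, 3, c)`, every hyperbolic triple dominates `(2, 4, 5)` or `(3, 4, 4)`. Writing
`r (2r + 1) = ∑ (4j - 1)`, for these two triples the summand at `j` is at most `4j - 1` as soon as
`j ≥ 10`, and the strict inequality at `r = 9` is a finite computation.
-/

open Finset

def exponentWeight (k m : ℕ) : ℕ := 1 + 2 * (m / k)

lemma exponentWeight_le_of_le {k l : ℕ} (hk : 0 < k) (hkl : k ≤ l) (m : ℕ) :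
    exponentWeight l m ≤ exponentWeight k m := by
  unfold exponentWeight
  gcongr

lemma sum_Icc_four_mul_sub_one (r : ℕ) : ∑ j ∈ Icc 1 r, (4 * j - 1) = r * (2 * r + 1) := by
  induction r with
  | zero => rfl
  | succ n ih =>
    rw [sum_Icc_succ_top (by omega), ih]
    grind

lemma sum_Icc_lt_of_lt_of_forall_le {f g : ℕ → ℕ} {r₀ r : ℕ}
    (hbase : ∑ j ∈ Icc 1 r₀, f j < ∑ j ∈ Icc 1 r₀, g j) (hle : ∀ j, r₀ < j → f j ≤ g j)
    (hr : r₀ ≤ r) : ∑ j ∈ Icc 1 r, f j < ∑ j ∈ Icc 1 r, g j := by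
  induction r, hr using Nat.le_induction with
  | base => exact hbase
  | succ n hn ih =>
    rw [sum_Icc_succ_top (by omega), sum_Icc_succ_top (by omega)]
    exact add_lt_add_of_lt_of_le ih (hle _ (by omega))

lemma sum_exponentWeight_le_of_le {p q s a b c : ℕ} (hp : 0 < p) (hq : 0 < q) (hs : 0 < s)
    (hpa : p ≤ a) (hqb : q ≤ b) (hsc : s ≤ c) (r : ℕ) :
    ∑ j ∈ Icc 1 r, (exponentWeight a (2 * j - 1) + exponentWeight b (2 * j - 1) +
        exponentWeight c (2 * j - 1)) ≤
      ∑ j ∈ Icc 1 r, (exponentWeight p (2 * j - 1) + exponentWeight q (2 * j - 1) +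
        exponentWeight s (2 * j - 1)) := by
  gcongr with j
  all_goals exact exponentWeight_le_of_le ‹_› ‹_› _

lemma hyperbolic_triple_dominates {a b c : ℕ} (ha : 0 < a) (hab : a ≤ b) (hbc : b ≤ c)
    (hhyp : (1 : ℚ) / a + 1 / b + 1 / c < 1) (h23 : (a, b) ≠ (2, 3)) (h33 : (a, b) ≠ (3, 3)) :
    (2 ≤ a ∧ 4 ≤ b ∧ 5 ≤ c) ∨ (3 ≤ a ∧ 4 ≤ b ∧ 4 ≤ c) := by
  have hb : (0 : ℚ) < (b : ℚ)⁻¹ := inv_pos.mpr (by exact_mod_cast ha.trans_le hab)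
  have hc : (0 : ℚ) < (c : ℚ)⁻¹ := inv_pos.mpr (by exact_mod_cast (ha.trans_le hab).trans_le hbc)
  have ha1 : a ≠ 1 := by
    rintro rfl
    norm_num at hhyp
    linarith
  have h22 : ¬(a = 2 ∧ b = 2) := by
    rintro ⟨rfl, rfl⟩
    norm_num at hhyp
    linarith
  have h244 : ¬(a = 2 ∧ b = 4 ∧ c = 4) := by
    rintro ⟨rfl, rfl, rfl⟩
    norm_num at hhyp
  simp only [ne_eq, Prod.mk.injEq] at h23 h33
  omega

lemma sum_exponentWeight_245_lt {r : ℕ} (hr : 9 ≤ r) :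
    ∑ j ∈ Icc 1 r, (exponentWeight 2 (2 * j - 1) + exponentWeight 4 (2 * j - 1) +
        exponentWeight 5 (2 * j - 1)) < r * (2 * r + 1) := by
  rw [← sum_Icc_four_mul_sub_one]
  refine sum_Icc_lt_of_lt_of_forall_le (by decide) (fun j hj => ?_) hr
  simp only [exponentWeight]
  omega

lemma sum_exponentWeight_344_lt {r : ℕ} (hr : 9 ≤ r) :
    ∑ j ∈ Icc 1 r, (exponentWeight 3 (2 * j - 1) + exponentWeight 4 (2 * j - 1) +
        exponentWeight 4 (2 * j - 1)) < r * (2 * r + 1) := by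
  rw [← sum_Icc_four_mul_sub_one]
  refine sum_Icc_lt_of_lt_of_forall_le (by decide) (fun j hj => ?_) hr
  simp only [exponentWeight]
  omega

theorem typeBC_inequality_large_rank_general (a b c r : ℕ) (ha : 0 < a) (hab : a ≤ b) (hbc : b ≤ c)
    (hhyp : (1 : ℚ)/a + 1/b + 1/c < 1)
    (h23 : (a, b) ≠ (2, 3)) (h33 : (a, b) ≠ (3, 3)) (hr9 : 9 ≤ r) :
    ∑ j ∈ Finset.Icc 1 r,
        ((1 + 2 * ((2 * j - 1) / a)) + (1 + 2 * ((2 * j - 1) / b)) + (1 + 2 * ((2 * j - 1) / c)))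
      < r * (2 * r + 1) := by
  change ∑ j ∈ Icc 1 r, (exponentWeight a (2 * j - 1) + exponentWeight b (2 * j - 1) +
    exponentWeight c (2 * j - 1)) < r * (2 * r + 1)
  rcases hyperbolic_triple_dominates ha hab hbc hhyp h23 h33 with
    ⟨ha', hb', hc'⟩ | ⟨ha', hb', hc'⟩
  · exact (sum_exponentWeight_le_of_le two_pos four_pos (by norm_num) ha' hb' hc' r).trans_lt
      (sum_exponentWeight_245_lt hr9)
  · exact (sum_exponentWeight_le_of_le three_pos four_pos four_pos ha' hb' hc' r).trans_lt
      (sum_exponentWeight_344_lt hr9)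

theorem typeBC_inequality_large_rank (a b c r : ℕ) (ha : 0 < a) (hab : a ≤ b) (hbc : b ≤ c)
    (hhyp : (1 : ℚ)/a + 1/b + 1/c < 1) (hr : 3 ≤ r)
    (h23 : (a, b) ≠ (2, 3)) (h33 : (a, b) ≠ (3, 3)) (hr9 : 9 ≤ r) :
    ∑ j ∈ Finset.Icc 1 r,
        ((1 + 2 * ((2 * j - 1) / a)) + (1 + 2 * ((2 * j - 1) / b)) + (1 + 2 * ((2 * j - 1) / c)))
      < r * (2 * r + 1) :=
  typeBC_inequality_large_rank_general a b c r ha hab hbc hhyp h23 h33 hr9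
end

section
/- For the type G_2 with exponents 1 and 5 and dimension 14, and a hyperbolic triple (a,b,c), the sum Σ_{k∈{a,b,c}} [(1 + 2⌊1/k⌋) + (1 + 2⌊5/k⌋)] is strictly less than 14 unless a = 2 and c = 5, i.e., unless (a,b,c) ∈ {(2,4,5),(2,5,5)}, in which case the sum equals 14. -/
/-!
For a hyperbolic triple `2 ≤ a`. If `a ≥ 3`, every `k ∈ {a, b, c}` contributes at most
`1 + 3 = 4`, so the sum is at most `12`. If `a = 2`, then `a` contributes `6`, `b ≥ 3`
contributes at most `4`, and `c` contributes `4` when `c ≤ 5` and `2` when `c ≥ 6`; among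
hyperbolic triples `(2, b, c)` with `c ≤ 5` only `(2, 4, 5)` and `(2, 5, 5)` remain.
-/

def g2Term (k : ℕ) : ℕ := (1 + 2 * (1 / k)) + (1 + 2 * (5 / k))

lemma g2Term_two : g2Term 2 = 6 := rfl

lemma g2Term_le_four {k : ℕ} (hk : 3 ≤ k) : g2Term k ≤ 4 := by
  have h1 : 1 / k = 0 := Nat.div_eq_of_lt (by omega)
  have h5 : 5 / k < 2 := (Nat.div_lt_iff_lt_mul (by omega)).2 (by omega)
  unfold g2Term
  omega

lemma g2Term_eq_two {k : ℕ} (hk : 6 ≤ k) : g2Term k = 2 := by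
  have h1 : 1 / k = 0 := Nat.div_eq_of_lt (by omega)
  have h5 : 5 / k = 0 := Nat.div_eq_of_lt (by omega)
  simp only [g2Term, h1, h5]

section Hyperbolic

variable {a b c : ℕ}

lemma ne_one_of_hyperbolic (h : (1 : ℚ) / a + 1 / b + 1 / c < 1) : a ≠ 1 := by
  rintro rfl
  have : (0 : ℚ) ≤ (b : ℚ)⁻¹ + (c : ℚ)⁻¹ := by positivity
  norm_num at h
  linarith

lemma ne_two_of_hyperbolic_two (h : (1 : ℚ) / 2 + 1 / b + 1 / c < 1) : b ≠ 2 := by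
  rintro rfl
  have : (0 : ℚ) ≤ (c : ℚ)⁻¹ := by positivity
  norm_num at h
  linarith

lemma hyperbolic_two_of_le_five (h : (1 : ℚ) / 2 + 1 / b + 1 / c < 1) (hb : 2 ≤ b)
    (hbc : b ≤ c) (hc : c ≤ 5) : c = 5 ∧ (b = 4 ∨ b = 5) := by
  have hb5 : b ≤ 5 := hbc.trans hc
  interval_cases b <;> interval_cases c <;> revert h <;> norm_num

end Hyperbolic

lemma g2Term_sum_lt_fourteen {a b c : ℕ} (ha : 2 ≤ a) (hab : a ≤ b) (hbc : b ≤ c)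
    (hhyp : (1 : ℚ) / a + 1 / b + 1 / c < 1) (hexc : ¬(a = 2 ∧ c = 5)) :
    g2Term a + g2Term b + g2Term c < 14 := by
  rcases ha.eq_or_lt with rfl | ha
  · have hb : 3 ≤ b := by have := ne_two_of_hyperbolic_two hhyp; omega
    have hc : 6 ≤ c := by
      by_contra! hc
      exact hexc ⟨rfl, (hyperbolic_two_of_le_five hhyp hab hbc (by omega)).1⟩
    have := g2Term_le_four hb
    rw [g2Term_two, g2Term_eq_two hc]
    omega
  · have := g2Term_le_four (k := a) ha
    have := g2Term_le_four (k := b) (by omega)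
    have := g2Term_le_four (k := c) (by omega)
    omega

theorem typeG2_inequality (a b c : ℕ) (ha : 0 < a) (hab : a ≤ b) (hbc : b ≤ c)
    (hhyp : (1 : ℚ)/a + 1/b + 1/c < 1) :
    (((1 + 2 * (1 / a)) + (1 + 2 * (5 / a))) + ((1 + 2 * (1 / b)) + (1 + 2 * (5 / b)))
        + ((1 + 2 * (1 / c)) + (1 + 2 * (5 / c))) < 14 ↔ ¬(a = 2 ∧ c = 5)) ∧
    ((a = 2 ∧ c = 5) →
      (((1 + 2 * (1 / a)) + (1 + 2 * (5 / a))) + ((1 + 2 * (1 / b)) + (1 + 2 * (5 / b)))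
        + ((1 + 2 * (1 / c)) + (1 + 2 * (5 / c))) = 14 ∧ (b = 4 ∨ b = 5))) := by
  have ha2 : 2 ≤ a := by have := ne_one_of_hyperbolic hhyp; omega
  by_cases hexc : a = 2 ∧ c = 5
  · obtain ⟨rfl, rfl⟩ := hexc
    have hb := (hyperbolic_two_of_le_five hhyp hab hbc le_rfl).2
    have hsum : g2Term 2 + g2Term b + g2Term 5 = 14 := by rcases hb with rfl | rfl <;> rfl
    exact ⟨⟨fun hlt => absurd hsum hlt.ne, fun h => absurd ⟨rfl, rfl⟩ h⟩, fun _ => ⟨hsum, hb⟩⟩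
  · have hlt := g2Term_sum_lt_fourteen ha2 hab hbc hhyp hexc
    exact ⟨iff_of_true hlt hexc, fun h => absurd h hexc⟩
end

section
/- For the type C_2 with exponents 1 and 3 and dimension 10, and a hyperbolic triple (a,b,c), the sum Σ_{k∈{a,b,c}} [(1 + 2⌊1/k⌋) + (1 + 2⌊3/k⌋)] is strictly less than 10 if and only if b ≥ 4 (equivalently, b ≠ 3); when b = 3 the sum equals 10. -/
/-! A hyperbolic triple has `a ≥ 2`, `b ≥ 3` and `c ≥ 4`, so `⌊1/k⌋` vanishes for all three entries
and `⌊3/k⌋` vanishes for `c`. The sum is therefore `6 + 2⌊3/a⌋ + 2⌊3/b⌋`: it is `10` when `b = 3`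
(then `a ∈ {2, 3}`), and at most `8` when `b ≥ 4`. -/

lemma one_div_natCast_le_one_div {m n : ℕ} (hm : 0 < m) (h : m ≤ n) :
    (1 : ℚ) / n ≤ 1 / m :=
  one_div_le_one_div_of_le (by exact_mod_cast hm) (by exact_mod_cast h)

lemma hyperbolic_triple_lower_bounds {a b c : ℕ} (ha : 0 < a) (hab : a ≤ b) (hbc : b ≤ c)
    (hhyp : (1 : ℚ) / a + 1 / b + 1 / c < 1) : 2 ≤ a ∧ 3 ≤ b ∧ 4 ≤ c := by
  have hb : 0 < b := ha.trans_le hab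
  have hc : 0 < c := hb.trans_le hbc
  have hb_nonneg : (0 : ℚ) ≤ 1 / b := by positivity
  have hc_nonneg : (0 : ℚ) ≤ 1 / c := by positivity
  refine ⟨?_, ?_, ?_⟩ <;> by_contra! h
  · have := one_div_natCast_le_one_div ha (show a ≤ 1 by omega)
    push_cast at this
    linarith
  · have := one_div_natCast_le_one_div ha (show a ≤ 2 by omega)
    have := one_div_natCast_le_one_div hb (show b ≤ 2 by omega)
    push_cast at *
    linarith
  · have := one_div_natCast_le_one_div ha (show a ≤ 3 by omega)
    have := one_div_natCast_le_one_div hb (show b ≤ 3 by omega)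
    have := one_div_natCast_le_one_div hc (show c ≤ 3 by omega)
    push_cast at *
    linarith

theorem typeC2_inequality (a b c : ℕ) (ha : 0 < a) (hab : a ≤ b) (hbc : b ≤ c)
    (hhyp : (1 : ℚ)/a + 1/b + 1/c < 1) :
    (((1 + 2 * (1 / a)) + (1 + 2 * (3 / a))) + ((1 + 2 * (1 / b)) + (1 + 2 * (3 / b)))
        + ((1 + 2 * (1 / c)) + (1 + 2 * (3 / c))) < 10 ↔ 4 ≤ b) ∧
    (b = 3 →
      ((1 + 2 * (1 / a)) + (1 + 2 * (3 / a))) + ((1 + 2 * (1 / b)) + (1 + 2 * (3 / b)))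
        + ((1 + 2 * (1 / c)) + (1 + 2 * (3 / c))) = 10) := by
  obtain ⟨ha2, hb3, hc4⟩ := hyperbolic_triple_lower_bounds ha hab hbc hhyp
  rw [Nat.div_eq_of_lt (show 1 < a by omega), Nat.div_eq_of_lt (show 1 < b by omega),
    Nat.div_eq_of_lt (show 1 < c by omega), Nat.div_eq_of_lt (show 3 < c by omega)]
  rcases hb3.eq_or_lt with rfl | hb4
  · rw [Nat.div_eq_of_lt_le (k := 1) (by omega) (by omega)]
    omega
  · have h3a : 3 / a < 2 := (Nat.div_lt_iff_lt_mul ha).2 (by omega)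
    rw [Nat.div_eq_of_lt hb4]
    omega
end

section
/- Let ω be a primitive 2a-th root of unity in ℂ and let e ≥ 1. The number of indices i in {−e, −e+1, ..., e} with ω^{2i} = 1 equals 1 + 2⌊e/a⌋. Consequently, for the principal SL_2 acting on a simple Lie algebra with exponents e_1,...,e_r, the fixed space of the image of an element of order a has dimension Σ_{j=1}^r (1 + 2⌊e_j/a⌋), and the rank of (Id − Ad ρ₀(x)) equals dim G − Σ_{j=1}^r (1 + 2⌊e_j/a⌋). -/
/-!
Since ω has order 2a, ω^(2i) = 1 exactly when a ∣ i, and the multiples of a in [-e, e] are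
a·k for |k| ≤ ⌊e/a⌋. The rank statement is rank–nullity for 1 - f, whose kernel is that of f - 1.
-/

open Finset

theorem IsPrimitiveRoot.zpow_mul_eq_one_iff_dvd {G : Type*} [DivisionCommMonoid G] {ζ : G}
    {m a : ℕ} (h : IsPrimitiveRoot ζ (m * a)) (hm : m ≠ 0) (i : ℤ) :
    ζ ^ ((m : ℤ) * i) = 1 ↔ (a : ℤ) ∣ i := by
  rw [h.zpow_eq_one_iff_dvd, Nat.cast_mul]
  exact mul_dvd_mul_iff_left (Int.natCast_ne_zero.mpr hm)

theorem Int.filter_dvd_Icc_neg_eq_image {a : ℕ} (ha : 0 < a) (e : ℕ) :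
    {i ∈ Icc (-(e : ℤ)) e | (a : ℤ) ∣ i} =
      (Icc (-((e / a : ℕ) : ℤ)) (e / a : ℕ)).image ((a : ℤ) * ·) := by
  have ha' : (0 : ℤ) < a := by exact_mod_cast ha
  ext i
  simp only [mem_filter, mem_Icc, mem_image, Int.natCast_ediv]
  constructor
  · rintro ⟨⟨hlo, hhi⟩, k, rfl⟩
    refine ⟨k, ⟨?_, ?_⟩, rfl⟩
    · rw [neg_le, Int.le_ediv_iff_mul_le ha']
      linarith
    · rw [Int.le_ediv_iff_mul_le ha']
      linarith
  · rintro ⟨k, ⟨hlo, hhi⟩, rfl⟩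
    rw [neg_le, Int.le_ediv_iff_mul_le ha'] at hlo
    rw [Int.le_ediv_iff_mul_le ha'] at hhi
    exact ⟨⟨by linarith, by linarith⟩, k, rfl⟩

theorem Int.card_filter_dvd_Icc_neg (a e : ℕ) :
    #{i ∈ Icc (-(e : ℤ)) e | (a : ℤ) ∣ i} = 1 + 2 * (e / a) := by
  rcases Nat.eq_zero_or_pos a with rfl | ha
  · simp [Finset.filter_eq']
  · rw [Int.filter_dvd_Icc_neg_eq_image ha, card_image_of_injective _
      (mul_right_injective₀ (by positivity)), Int.card_Icc]
    omega

theorem LinearMap.finrank_range_one_sub_add_finrank_ker_sub_one {K V : Type*} [DivisionRing K]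
    [AddCommGroup V] [Module K V] [FiniteDimensional K V] (f : V →ₗ[K] V) :
    Module.finrank K (range (1 - f)) + Module.finrank K (ker (f - 1)) = Module.finrank K V := by
  rw [← LinearMap.ker_neg, neg_sub]
  exact LinearMap.finrank_range_add_finrank_ker _

theorem principal_fixed_space_dimension_general (a e : ℕ)
    (ω : ℂ) (hω : IsPrimitiveRoot ω (2 * a)) :
    (((Finset.Icc (-(e : ℤ)) (e : ℤ)).filter (fun i => ω ^ (2 * i) = 1)).card
        = 1 + 2 * (e / a)) ∧
    (∀ (r : ℕ) (E : Fin r → ℕ) (V : Type) (_ : AddCommGroup V), ∀ (_ : Module ℂ V)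
        (_ : FiniteDimensional ℂ V) (f : V →ₗ[ℂ] V),
      Module.finrank ℂ V = ∑ j, (1 + 2 * E j) →
      Module.finrank ℂ (LinearMap.ker (f - 1)) = ∑ j, (1 + 2 * (E j / a)) →
      Module.finrank ℂ (LinearMap.range (1 - f))
        = (∑ j, (1 + 2 * E j)) - ∑ j, (1 + 2 * (E j / a))) := by
  refine ⟨?_, fun r E V _ _ _ f hV hker => ?_⟩
  · have hroots : ∀ i : ℤ, ω ^ (2 * i) = 1 ↔ (a : ℤ) ∣ i := fun i => by
      simpa using hω.zpow_mul_eq_one_iff_dvd two_ne_zero i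
    simp only [hroots]
    exact Int.card_filter_dvd_Icc_neg a e
  · have := f.finrank_range_one_sub_add_finrank_ker_sub_one
    omega

theorem principal_fixed_space_dimension (a e : ℕ) (ha : 0 < a) (he : 1 ≤ e)
    (ω : ℂ) (hω : IsPrimitiveRoot ω (2 * a)) :
    (((Finset.Icc (-(e : ℤ)) (e : ℤ)).filter (fun i => ω ^ (2 * i) = 1)).card
        = 1 + 2 * (e / a)) ∧
    (∀ (r : ℕ) (E : Fin r → ℕ) (V : Type) (_ : AddCommGroup V), ∀ (_ : Module ℂ V)
        (_ : FiniteDimensional ℂ V) (f : V →ₗ[ℂ] V),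
      Module.finrank ℂ V = ∑ j, (1 + 2 * E j) →
      Module.finrank ℂ (LinearMap.ker (f - 1)) = ∑ j, (1 + 2 * (E j / a)) →
      Module.finrank ℂ (LinearMap.range (1 - f))
        = (∑ j, (1 + 2 * E j)) - ∑ j, (1 + 2 * (E j / a))) :=
  principal_fixed_space_dimension_general a e ω hω
end

section
/- Let (a,b,c) be a hyperbolic triple with 1/a+1/b+1/c < 1/2 and let e_1,...,e_r (r ≥ 2) be the exponents of any irreducible root system of rank r ≥ 2. Then Σ_{k∈{a,b,c}} Σ_{j=1}^r (1 + 2⌊e_j/k⌋) < Σ_{j=1}^r (1 + 2e_j). -/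
/-- `E` is the multiset of exponents of an irreducible root system of rank `r`. -/
def IsIrreducibleExponents (r : ℕ) (E : Multiset ℕ) : Prop :=
  (E = (Multiset.range r).map (· + 1)) ∨
  (E = (Multiset.range r).map (fun j => 2 * j + 1)) ∨
  (4 ≤ r ∧ E = (r - 1) ::ₘ (Multiset.range (r - 1)).map (fun j => 2 * j + 1)) ∨
  (r = 6 ∧ E = {1, 4, 5, 7, 8, 11}) ∨
  (r = 7 ∧ E = {1, 5, 7, 9, 11, 13, 17}) ∨
  (r = 8 ∧ E = {1, 7, 11, 13, 17, 19, 23, 29}) ∨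
  (r = 4 ∧ E = {1, 5, 7, 11}) ∨
  (r = 2 ∧ E = {1, 5})

lemma two_mul_div_add_div_add_div_lt {a b c : ℕ} (hμ : (1 : ℚ) / a + 1 / b + 1 / c < 1 / 2)
    {e : ℕ} (he : 0 < e) : 2 * (e / a + e / b + e / c) < e := by
  have hfloor : ((e / a + e / b + e / c : ℕ) : ℚ) ≤ e * ((1 : ℚ) / a + 1 / b + 1 / c) := by
    push_cast
    have ha : ((e / a : ℕ) : ℚ) ≤ e / a := Nat.cast_div_le
    have hb : ((e / b : ℕ) : ℚ) ≤ e / b := Nat.cast_div_le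
    have hc : ((e / c : ℕ) : ℚ) ≤ e / c := Nat.cast_div_le
    linarith [show (e : ℚ) * (1 / a + 1 / b + 1 / c) = e / a + e / b + e / c by ring]
  have hμe : (e : ℚ) * ((1 : ℚ) / a + 1 / b + 1 / c) < e * (1 / 2) :=
    mul_lt_mul_of_pos_left hμ (by exact_mod_cast he)
  exact_mod_cast (by linarith : (2 * (e / a + e / b + e / c : ℕ) : ℚ) < e)

namespace IsIrreducibleExponents

variable {r : ℕ} {E : Multiset ℕ}

lemma pos (hE : IsIrreducibleExponents r E) : ∀ e ∈ E, 0 < e := by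
  rcases hE with rfl | rfl | ⟨hr, rfl⟩ | ⟨-, rfl⟩ | ⟨-, rfl⟩ | ⟨-, rfl⟩ | ⟨-, rfl⟩ | ⟨-, rfl⟩
  · simp
  · simp
  · simp only [Multiset.mem_cons, Multiset.mem_map]
    rintro e (rfl | ⟨j, -, rfl⟩) <;> omega
  all_goals simp

lemma exists_two_le (hE : IsIrreducibleExponents r E) (hr : 2 ≤ r) : ∃ e ∈ E, 2 ≤ e := by
  rcases hE with rfl | rfl | ⟨hr4, rfl⟩ | ⟨-, rfl⟩ | ⟨-, rfl⟩ | ⟨-, rfl⟩ | ⟨-, rfl⟩ | ⟨-, rfl⟩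
  · exact ⟨r, Multiset.mem_map.2 ⟨r - 1, Multiset.mem_range.2 (by omega), by omega⟩, hr⟩
  · exact ⟨3, Multiset.mem_map.2 ⟨1, Multiset.mem_range.2 (by omega), rfl⟩, by norm_num⟩
  · exact ⟨r - 1, Multiset.mem_cons_self _ _, by omega⟩
  all_goals simp

end IsIrreducibleExponents

theorem inequality_of_mu_lt_half_general (a b c r : ℕ)
    (hhyp : (1 : ℚ)/a + 1/b + 1/c < 1/2) (hr : 2 ≤ r)
    (E : Multiset ℕ) (hE : IsIrreducibleExponents r E) :
    (E.map (fun e => (1 + 2 * (e / a)) + (1 + 2 * (e / b)) + (1 + 2 * (e / c)))).sum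
      < (E.map (fun e => 1 + 2 * e)).sum := by
  -- Termwise, `2 * (e/a + e/b + e/c) < e` gives `≤` for `e ≥ 1` and `<` once `e ≥ 2`.
  apply Multiset.sum_lt_sum
  · intro e he
    have := two_mul_div_add_div_add_div_lt hhyp (hE.pos e he)
    omega
  · obtain ⟨e, he, h2⟩ := hE.exists_two_le hr
    have := two_mul_div_add_div_add_div_lt hhyp (hE.pos e he)
    exact ⟨e, he, by omega⟩

theorem inequality_of_mu_lt_half (a b c r : ℕ) (ha : 0 < a) (hab : a ≤ b) (hbc : b ≤ c)
    (hhyp : (1 : ℚ)/a + 1/b + 1/c < 1/2) (hr : 2 ≤ r)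
    (E : Multiset ℕ) (hE : IsIrreducibleExponents r E) :
    (E.map (fun e => (1 + 2 * (e / a)) + (1 + 2 * (e / b)) + (1 + 2 * (e / c)))).sum
      < (E.map (fun e => 1 + 2 * e)).sum :=
  inequality_of_mu_lt_half_general a b c r hhyp hr E hE
end
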